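/- Let 0 < R < 1 and let c : [R,1] → (0,∞) be C^{1,1} and satisfy the Herglotz condition. Then for every z ∈ (0, R/c(R)) the function β is differentiable at z with β'(z) = ∫_R^1 (c(r)/r^2) · (1 − (z c(r)/r)^2)^{-3/2} dr > 0; consequently β is strictly increasing and continuous on (0, R/c(R)) with finite one-sided limits at the endpoints 0 and R/c(R), hence a homeomorphism of [0, R/c(R)] (after continuous extension) onto its image. -/

import Mathlib

/-- `c` is `C^{1,1}` on `[R,1]`: differentiable with Lipschitz derivative. -/
def IsC11On (c : ℝ → ℝ) (R : ℝ) : Prop :=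
  ∃ c' : ℝ → ℝ, ∃ K : NNReal,
    (∀ r ∈ Set.Icc R 1, HasDerivWithinAt c (c' r) (Set.Icc R 1) r) ∧
    LipschitzOnWith K c' (Set.Icc R 1)

/-- The Herglotz condition: `d/dr (r / c r) > 0` on `[R,1]`. -/
def HerglotzCond (c : ℝ → ℝ) (R : ℝ) : Prop :=
  ∀ r ∈ Set.Icc R 1, 0 < derivWithin (fun s => s / c s) (Set.Icc R 1) r

/-- Half length `L(r)` of the maximal geodesic of radius `r`. -/
noncomputable def Lfun (c : ℝ → ℝ) (r : ℝ) : ℝ :=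
  ∫ s in r..1, (c s)⁻¹ * (Real.sqrt (1 - (r * c s / (s * c r)) ^ 2))⁻¹

/-- Half of the angular distance `α(r)` between the endpoints of the maximal geodesic
of radius `r`. -/
noncomputable def alphaFun (c : ℝ → ℝ) (r : ℝ) : ℝ :=
  ∫ s in r..1, (r * c s) / (c r * s ^ 2) * (Real.sqrt (1 - (r * c s / (s * c r)) ^ 2))⁻¹

/-- The angular advance `β(z)` of a geodesic segment from the inner boundary `r = R`
to the outer boundary `r = 1` with angular momentum `z`. -/
noncomputable def betaFun (c : ℝ → ℝ) (R : ℝ) (z : ℝ) : ℝ :=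
  ∫ r in R..1, (z * c r / r ^ 2) * (Real.sqrt (1 - (z * c r / r) ^ 2))⁻¹

/-!
Write `φ r = r / c r` and `t = z c(r) / r = z / φ(r)`; the integrand of `β` is
`r⁻¹ · t (1 - t²)^{-1/2}`, whose `z`-derivative is `(c r / r²)(1 - t²)^{-3/2}`. Since `φ'` is
continuous and positive on `[R, 1]`, `φ r ≥ φ R + m (r - R)` for some `m > 0`. Hence `t < 1`
away from `r = R` whenever `z ≤ φ R`, and `1 - t² ≥ 1 - t ≳ r - R`, so the integrand is dominated by
a multiple of `(r - R)^{-1/2}` uniformly in `z ∈ [0, φ R]`. Dominated convergence makes `β`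
continuous on the closed interval `[0, φ R]` and dominated differentiation gives the derivative
inside it; the derivative being positive, `β` itself is the required strictly increasing extension.
-/

open Set Filter MeasureTheory Interval

lemma hasDerivAt_mul_inv_sqrt_one_sub_sq {t : ℝ} (ht : t ^ 2 < 1) :
    HasDerivAt (fun t => t * (√(1 - t ^ 2))⁻¹) ((√(1 - t ^ 2) ^ 3)⁻¹) t := by
  have hpos : 0 < 1 - t ^ 2 := by linarith
  have hs : √(1 - t ^ 2) ≠ 0 := (Real.sqrt_pos.2 hpos).ne'
  have hsq : √(1 - t ^ 2) ^ 2 = 1 - t ^ 2 := Real.sq_sqrt hpos.le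
  have hsqrt : HasDerivAt (fun t => √(1 - t ^ 2)) (-(2 * t) / (2 * √(1 - t ^ 2))) t := by
    simpa using ((hasDerivAt_pow 2 t).const_sub 1).sqrt hpos.ne'
  refine ((hasDerivAt_id' t).mul (hsqrt.inv hs)).congr_deriv ?_
  simp only [Pi.inv_apply]
  field_simp
  linear_combination hsq

noncomputable def betaIntegrand (c : ℝ → ℝ) (z r : ℝ) : ℝ :=
  (z * c r / r ^ 2) * (Real.sqrt (1 - (z * c r / r) ^ 2))⁻¹

noncomputable def betaIntegrandDeriv (c : ℝ → ℝ) (z r : ℝ) : ℝ :=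
  (c r / r ^ 2) * (Real.sqrt (1 - (z * c r / r) ^ 2) ^ 3)⁻¹

lemma hasDerivAt_betaIntegrand {c : ℝ → ℝ} {z r : ℝ} (h : (z * c r / r) ^ 2 < 1) :
    HasDerivAt (betaIntegrand c · r) (betaIntegrandDeriv c z r) z := by
  have hlin : HasDerivAt (fun z => z * c r / r) (c r / r) z := by
    simpa using ((hasDerivAt_id z).mul_const (c r)).div_const r
  have := ((hasDerivAt_mul_inv_sqrt_one_sub_sq h).comp z hlin).const_mul r⁻¹
  refine (this.congr_deriv (by simp only [betaIntegrandDeriv]; ring)).congr_of_eventuallyEq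
    (Eventually.of_forall fun y => ?_)
  simp only [betaIntegrand, Function.comp_apply]
  ring

lemma exists_pos_mul_sub_le_sub_of_hasDerivWithinAt {f f' : ℝ → ℝ} {a b : ℝ}
    (hf : ∀ x ∈ Icc a b, HasDerivWithinAt f (f' x) (Icc a b) x)
    (hf' : ContinuousOn f' (Icc a b)) (hpos : ∀ x ∈ Icc a b, 0 < f' x) :
    ∃ m > 0, ∀ x ∈ Icc a b, m * (x - a) ≤ f x - f a := by
  obtain ⟨m, hm, hmle⟩ := isCompact_Icc.exists_forall_le' hf' hpos
  have hderiv : ∀ x ∈ interior (Icc a b), HasDerivAt f (f' x) x := fun x hx => by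
    rw [interior_Icc] at hx
    exact (hf x (Ioo_subset_Icc_self hx)).hasDerivAt (Icc_mem_nhds hx.1 hx.2)
  refine ⟨m, hm, fun x hx => (convex_Icc a b).mul_sub_le_image_sub_of_le_deriv
    (fun y hy => (hf y hy).continuousWithinAt)
    (fun y hy => (hderiv y hy).differentiableAt.differentiableWithinAt)
    (fun y hy => (hderiv y hy).deriv ▸ hmle y (interior_subset hy))
    a (left_mem_Icc.2 (hx.1.trans hx.2)) x hx hx.1⟩

lemma IsCompact.exists_homeomorph_image {X Y : Type*} [TopologicalSpace X] [TopologicalSpace Y]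
    [T2Space Y] {s : Set X} {f : X → Y} (hs : IsCompact s) (hf : ContinuousOn f s)
    (hinj : InjOn f s) : ∃ h : s ≃ₜ f '' s, ∀ x, (h x : Y) = f x := by
  have := isCompact_iff_compactSpace.1 hs
  have hemb := ((continuousOn_iff_continuous_domRestrict.1 hf).isClosedEmbedding
    hinj.injective).isEmbedding
  exact ⟨hemb.toHomeomorph.trans (Homeomorph.setCongr (image_eq_range f s).symm), fun _ => rfl⟩

lemma IsC11On.continuousOn {c : ℝ → ℝ} {R : ℝ} (h : IsC11On c R) : ContinuousOn c (Icc R 1) := by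
  obtain ⟨c', K, hc', -⟩ := h
  exact fun r hr => (hc' r hr).continuousWithinAt

lemma HerglotzCond.exists_pos_mul_sub_le {c : ℝ → ℝ} {R : ℝ} (hHerg : HerglotzCond c R)
    (hR1 : R < 1) (hpos : ∀ r ∈ Icc R 1, 0 < c r) (hC11 : IsC11On c R) :
    ∃ m > 0, ∀ r ∈ Icc R 1, m * (r - R) ≤ r / c r - R / c R := by
  have hc := hC11.continuousOn
  obtain ⟨c', K, hc', hlip⟩ := hC11
  have hφ : ∀ r ∈ Icc R 1, HasDerivWithinAt (fun s => s / c s)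
      ((1 * c r - r * c' r) / c r ^ 2) (Icc R 1) r :=
    fun r hr => (hasDerivWithinAt_id (x := r) (s := Icc R 1)).div (hc' r hr) (hpos r hr).ne'
  refine exists_pos_mul_sub_le_sub_of_hasDerivWithinAt hφ ?_ fun r hr => ?_
  · exact ((continuousOn_const.mul hc).sub (continuousOn_id.mul hlip.continuousOn)).div
      (hc.pow 2) fun r hr => pow_ne_zero 2 (hpos r hr).ne'
  · rw [← (hφ r hr).derivWithin (uniqueDiffOn_Icc hR1 r hr)]
    exact hHerg r hr

lemma sq_mul_div_lt_one {p q z : ℝ} (hp : 0 < p) (hq : 0 < q) (hz : 0 ≤ z) (h : z < q / p) :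
    (z * p / q) ^ 2 < 1 := by
  have h1 : z * p / q < 1 := by rwa [div_lt_one hq, ← lt_div_iff₀ hp]
  exact pow_lt_one₀ (by positivity) h1 two_ne_zero

lemma div_mul_inv_sqrt_one_sub_sq_le {R r t : ℝ} (hR : 0 < R) (hr : R ≤ r) (ht0 : 0 ≤ t)
    (ht1 : t < 1) : t / r * (√(1 - t ^ 2))⁻¹ ≤ R⁻¹ * (√(1 - t))⁻¹ := by
  have hsq : 1 - t ≤ 1 - t ^ 2 := by nlinarith
  have hroot : 0 < √(1 - t) := Real.sqrt_pos.2 (by linarith)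
  have htr : t / r ≤ R⁻¹ := by
    rw [div_le_iff₀ (hR.trans_le hr)]
    nlinarith [inv_mul_cancel₀ hR.ne', inv_pos.2 hR]
  gcongr

lemma betaIntegrand_nonneg {c : ℝ → ℝ} {z r : ℝ} (hz : 0 ≤ z) (hcr : 0 ≤ c r) :
    0 ≤ betaIntegrand c z r := by
  unfold betaIntegrand
  positivity

lemma betaIntegrandDeriv_nonneg {c : ℝ → ℝ} {z r : ℝ} (hcr : 0 ≤ c r) :
    0 ≤ betaIntegrandDeriv c z r := by
  unfold betaIntegrandDeriv
  positivity

lemma betaIntegrand_le {c : ℝ → ℝ} {R z₀ m M z r : ℝ} (hR : 0 < R) (hm : 0 < m) (hr : R < r)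
    (hcr : 0 < c r) (hφ : m * (r - R) ≤ r / c r - z₀) (hM : r / c r ≤ M) (hz : z ∈ Icc 0 z₀) :
    betaIntegrand c z r ≤ R⁻¹ * (√(m / M))⁻¹ * (r - R) ^ (-(1 / 2 : ℝ)) := by
  have hr0 : 0 < r := hR.trans hr
  set φ := r / c r with hφdef
  have hφ0 : 0 < φ := div_pos hr0 hcr
  have hgap : 0 < m * (r - R) := mul_pos hm (sub_pos.2 hr)
  have hM0 : 0 < M := hφ0.trans_le hM
  have hgap_le : m * (r - R) / M ≤ 1 - z / φ := by
    rw [one_sub_div hφ0.ne']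
    exact div_le_div₀ (by linarith [hz.2]) (by linarith [hz.2]) hφ0 hM
  have hroot : √(m / M) * (r - R) ^ (1 / 2 : ℝ) ≤ √(1 - z / φ) := by
    rw [← Real.sqrt_eq_rpow, ← Real.sqrt_mul (by positivity), div_mul_eq_mul_div]
    exact Real.sqrt_le_sqrt hgap_le
  have hintegrand : betaIntegrand c z r = z / φ / r * (√(1 - (z / φ) ^ 2))⁻¹ := by
    rw [betaIntegrand, hφdef, div_div_eq_mul_div, div_div, sq]
  calc betaIntegrand c z r ≤ R⁻¹ * (√(1 - z / φ))⁻¹ := by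
        rw [hintegrand]
        exact div_mul_inv_sqrt_one_sub_sq_le hR hr.le (div_nonneg hz.1 hφ0.le)
          (by linarith [div_pos hgap hM0])
    _ ≤ R⁻¹ * (√(m / M) * (r - R) ^ (1 / 2 : ℝ))⁻¹ := by
        gcongr
    _ = R⁻¹ * (√(m / M))⁻¹ * (r - R) ^ (-(1 / 2 : ℝ)) := by
        rw [Real.rpow_neg (sub_pos.2 hr).le, mul_inv, mul_assoc]

lemma betaIntegrandDeriv_le {c : ℝ → ℝ} {R z₀ w x r : ℝ} (hR : 0 < R) (hr : R ≤ r)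
    (hcr : 0 < c r) (hz₀ : 0 < z₀) (hφ : z₀ ≤ r / c r) (hx : x ∈ Icc 0 w) (hw : w < z₀) :
    betaIntegrandDeriv c x r ≤ (R * z₀)⁻¹ * (√(1 - (w / z₀) ^ 2) ^ 3)⁻¹ := by
  have hr0 : 0 < r := hR.trans_le hr
  have hw0 : 0 < 1 - (w / z₀) ^ 2 := by
    have : w / z₀ < 1 := (div_lt_one hz₀).2 hw
    nlinarith [div_nonneg (hx.1.trans hx.2) hz₀.le]
  have hroot := Real.sqrt_pos.2 hw0
  have hxw : x / (r / c r) ≤ w / z₀ := div_le_div₀ (hx.1.trans hx.2) hx.2 hz₀ hφ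
  have hcoef : c r / r ^ 2 = (r * (r / c r))⁻¹ := by field_simp
  rw [betaIntegrandDeriv, ← div_div_eq_mul_div, hcoef]
  gcongr
  have : 0 ≤ x / (r / c r) := div_nonneg hx.1 (by positivity)
  nlinarith

lemma intervalIntegrable_mul_sub_rpow_neg_half (R K : ℝ) :
    IntervalIntegrable (fun r => K * (r - R) ^ (-(1 / 2 : ℝ))) volume R 1 := by
  have := (intervalIntegral.intervalIntegrable_rpow' (a := 0) (b := 1 - R)
    (r := -(1 / 2 : ℝ)) (by norm_num)).comp_sub_right R
  simp only [zero_add, sub_add_cancel] at this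
  exact this.const_mul K

lemma continuousOn_sqrt_one_sub_sq {c : ℝ → ℝ} {s : Set ℝ} {z : ℝ} (hc : ContinuousOn c s)
    (hs : ∀ r ∈ s, r ≠ 0) : ContinuousOn (fun r => √(1 - (z * c r / r) ^ 2)) s :=
  (continuousOn_const.sub (((continuousOn_const.mul hc).div continuousOn_id hs).pow 2)).sqrt

lemma continuousOn_betaIntegrand {c : ℝ → ℝ} {s : Set ℝ} {z : ℝ} (hc : ContinuousOn c s)
    (hs : ∀ r ∈ s, r ≠ 0 ∧ (z * c r / r) ^ 2 < 1) : ContinuousOn (betaIntegrand c z) s :=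
  ((continuousOn_const.mul hc).div (continuousOn_id.pow 2)
    fun r hr => pow_ne_zero 2 (hs r hr).1).mul
    ((continuousOn_sqrt_one_sub_sq hc fun r hr => (hs r hr).1).inv₀
      fun r hr => (Real.sqrt_pos.2 (sub_pos.2 (hs r hr).2)).ne')

lemma continuousOn_betaIntegrandDeriv {c : ℝ → ℝ} {s : Set ℝ} {z : ℝ} (hc : ContinuousOn c s)
    (hs : ∀ r ∈ s, r ≠ 0 ∧ (z * c r / r) ^ 2 < 1) :
    ContinuousOn (betaIntegrandDeriv c z) s :=
  (hc.div (continuousOn_id.pow 2) fun r hr => pow_ne_zero 2 (hs r hr).1).mul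
    (((continuousOn_sqrt_one_sub_sq hc fun r hr => (hs r hr).1).pow 3).inv₀
      fun r hr => pow_ne_zero 3 (Real.sqrt_pos.2 (sub_pos.2 (hs r hr).2)).ne')

section betaFun

variable {c : ℝ → ℝ} {R z₀ : ℝ}

lemma ne_zero_and_sq_mul_div_lt_one (hR : 0 < R) (hpos : ∀ r ∈ Icc R 1, 0 < c r) {x r : ℝ}
    (hr : r ∈ Icc R 1) (hx : 0 ≤ x) (hxr : x < r / c r) : r ≠ 0 ∧ (x * c r / r) ^ 2 < 1 :=
  ⟨(hR.trans_le hr.1).ne', sq_mul_div_lt_one (hpos r hr) (hR.trans_le hr.1) hx hxr⟩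

lemma hasDerivAt_betaFun (hR : 0 < R) (hR1 : R < 1) (hpos : ∀ r ∈ Icc R 1, 0 < c r)
    (hc : ContinuousOn c (Icc R 1)) (hφ : ∀ r ∈ Icc R 1, z₀ ≤ r / c r) {z : ℝ}
    (hz : z ∈ Ioo 0 z₀) :
    HasDerivAt (betaFun c R) (∫ r in R..1, betaIntegrandDeriv c z r) z := by
  obtain ⟨w, hzw, hw⟩ := exists_between hz.2
  have hz₀ : 0 < z₀ := hz.1.trans hz.2
  have hlt : ∀ x ∈ Ico 0 z₀, ∀ r ∈ Icc R 1, r ≠ 0 ∧ (x * c r / r) ^ 2 < 1 :=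
    fun x hx r hr => ne_zero_and_sq_mul_div_lt_one hR hpos hr hx.1 (hx.2.trans_le (hφ r hr))
  have hIoc : Ι R 1 ⊆ Icc R 1 := uIoc_of_le hR1.le ▸ Ioc_subset_Icc_self
  have hnear : ∀ x ∈ Ioo 0 w, x ∈ Ico 0 z₀ := fun x hx => ⟨hx.1.le, hx.2.trans hw⟩
  refine (intervalIntegral.hasDerivAt_integral_of_dominated_loc_of_deriv_le
    (bound := fun _ => (R * z₀)⁻¹ * (√(1 - (w / z₀) ^ 2) ^ 3)⁻¹)
    (Ioo_mem_nhds hz.1 hzw) ?_ ?_ ?_ ?_ intervalIntegrable_const ?_).2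
  · filter_upwards [Ioo_mem_nhds hz.1 hzw] with x hx
    exact ((continuousOn_betaIntegrand hc (hlt x (hnear x hx))).mono hIoc).aestronglyMeasurable
      measurableSet_uIoc
  · exact ((continuousOn_betaIntegrand hc (hlt z ⟨hz.1.le, hz.2⟩)).mono
      (uIcc_of_le hR1.le).subset).intervalIntegrable
  · exact ((continuousOn_betaIntegrandDeriv hc (hlt z ⟨hz.1.le, hz.2⟩)).mono
      hIoc).aestronglyMeasurable measurableSet_uIoc
  · refine ae_of_all _ fun r hr x hx => ?_
    have hr' := hIoc hr
    rw [Real.norm_of_nonneg (betaIntegrandDeriv_nonneg (hpos r hr').le)]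
    exact betaIntegrandDeriv_le hR hr'.1 (hpos r hr') hz₀ (hφ r hr') ⟨hx.1.le, hx.2.le⟩ hw
  · exact ae_of_all _ fun r hr x hx => hasDerivAt_betaIntegrand (hlt x (hnear x hx) r (hIoc hr)).2

lemma integral_betaIntegrandDeriv_pos (hR : 0 < R) (hR1 : R < 1)
    (hpos : ∀ r ∈ Icc R 1, 0 < c r) (hc : ContinuousOn c (Icc R 1))
    (hφ : ∀ r ∈ Icc R 1, z₀ ≤ r / c r) {z : ℝ} (hz : z ∈ Ico 0 z₀) :
    0 < ∫ r in R..1, betaIntegrandDeriv c z r := by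
  have hlt : ∀ r ∈ Icc R 1, r ≠ 0 ∧ (z * c r / r) ^ 2 < 1 :=
    fun r hr => ne_zero_and_sq_mul_div_lt_one hR hpos hr hz.1 (hz.2.trans_le (hφ r hr))
  refine intervalIntegral.intervalIntegral_pos_of_pos_on
    ((continuousOn_betaIntegrandDeriv hc hlt).mono (uIcc_of_le hR1.le).subset).intervalIntegrable
    (fun r hr => ?_) hR1
  have hr' := Ioo_subset_Icc_self hr
  have hroot := Real.sqrt_pos.2 (sub_pos.2 (hlt r hr').2)
  have hcr := hpos r hr'
  have hr0 := hR.trans hr.1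
  unfold betaIntegrandDeriv
  positivity

lemma continuousOn_betaFun {m M : ℝ} (hR : 0 < R) (hR1 : R < 1)
    (hpos : ∀ r ∈ Icc R 1, 0 < c r) (hc : ContinuousOn c (Icc R 1)) (hm : 0 < m)
    (hφ : ∀ r ∈ Icc R 1, m * (r - R) ≤ r / c r - z₀) (hM : ∀ r ∈ Icc R 1, r / c r ≤ M) :
    ContinuousOn (betaFun c R) (Icc 0 z₀) := by
  have hIoc : Ι R 1 = Ioc R 1 := uIoc_of_le hR1.le
  have hlt : ∀ x ∈ Icc 0 z₀, ∀ r ∈ Ioc R 1, r ≠ 0 ∧ (x * c r / r) ^ 2 < 1 :=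
    fun x hx r hr => ne_zero_and_sq_mul_div_lt_one hR hpos (Ioc_subset_Icc_self hr) hx.1
      (by linarith [hφ r (Ioc_subset_Icc_self hr), hx.2, mul_pos hm (sub_pos.2 hr.1)])
  intro z hz
  refine intervalIntegral.continuousWithinAt_of_dominated_interval
    (F := betaIntegrand c) (bound := fun r => R⁻¹ * (√(m / M))⁻¹ * (r - R) ^ (-(1 / 2 : ℝ)))
    (eventually_nhdsWithin_of_forall fun x hx => ?_)
    (eventually_nhdsWithin_of_forall fun x hx => ae_of_all _ fun r hr => ?_)
    (intervalIntegrable_mul_sub_rpow_neg_half R _)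
    (ae_of_all _ fun r hr => ?_)
  · rw [hIoc]
    exact (continuousOn_betaIntegrand (hc.mono Ioc_subset_Icc_self) (hlt x hx)).aestronglyMeasurable
      measurableSet_Ioc
  · rw [hIoc] at hr
    have hcr := hpos r (Ioc_subset_Icc_self hr)
    rw [Real.norm_of_nonneg (betaIntegrand_nonneg hx.1 hcr.le)]
    exact betaIntegrand_le hR hm hr.1 hcr (hφ r (Ioc_subset_Icc_self hr))
      (hM r (Ioc_subset_Icc_self hr)) hx
  · rw [hIoc] at hr
    exact (hasDerivAt_betaIntegrand (hlt z hz r hr).2).continuousAt.continuousWithinAt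

end betaFun

theorem stmt15 (R : ℝ) (hR0 : 0 < R) (hR1 : R < 1) (c : ℝ → ℝ)
    (hpos : ∀ r ∈ Set.Icc R 1, 0 < c r)
    (hC11 : IsC11On c R) (hHerg : HerglotzCond c R) :
    (∀ z ∈ Set.Ioo 0 (R / c R),
      HasDerivAt (betaFun c R)
        (∫ r in R..1, (c r / r ^ 2) * (Real.sqrt (1 - (z * c r / r) ^ 2) ^ 3)⁻¹) z ∧
      0 < ∫ r in R..1, (c r / r ^ 2) * (Real.sqrt (1 - (z * c r / r) ^ 2) ^ 3)⁻¹) ∧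
    StrictMonoOn (betaFun c R) (Set.Ioo 0 (R / c R)) ∧
    ContinuousOn (betaFun c R) (Set.Ioo 0 (R / c R)) ∧
    (∃ b0 bR : ℝ,
      Filter.Tendsto (betaFun c R) (nhdsWithin 0 (Set.Ioo 0 (R / c R))) (nhds b0) ∧
      Filter.Tendsto (betaFun c R) (nhdsWithin (R / c R) (Set.Ioo 0 (R / c R)))
        (nhds bR)) ∧
    (∃ g : ℝ → ℝ, ContinuousOn g (Set.Icc 0 (R / c R)) ∧
      StrictMonoOn g (Set.Icc 0 (R / c R)) ∧
      Set.EqOn g (betaFun c R) (Set.Ioo 0 (R / c R)) ∧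
      ∃ h : Set.Icc 0 (R / c R) ≃ₜ (g '' Set.Icc 0 (R / c R)),
        ∀ x : Set.Icc 0 (R / c R), (h x : ℝ) = g x) := by
  have hc := hC11.continuousOn
  have hz₀ : 0 < R / c R := div_pos hR0 (hpos R (left_mem_Icc.2 hR1.le))
  obtain ⟨m, hm, hφ⟩ := hHerg.exists_pos_mul_sub_le hR1 hpos hC11
  have hφ₀ : ∀ r ∈ Icc R 1, R / c R ≤ r / c r :=
    fun r hr => by nlinarith [hφ r hr, mul_nonneg hm.le (sub_nonneg.2 hr.1)]
  obtain ⟨M, hM⟩ := isCompact_Icc.bddAbove_image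
    (continuousOn_id.div hc fun r hr => (hpos r hr).ne')
  have hderiv : ∀ z ∈ Ioo 0 (R / c R),
      HasDerivAt (betaFun c R) (∫ r in R..1, betaIntegrandDeriv c z r) z :=
    fun z hz => hasDerivAt_betaFun hR0 hR1 hpos hc hφ₀ hz
  have hderiv_pos : ∀ z ∈ Ioo 0 (R / c R), 0 < ∫ r in R..1, betaIntegrandDeriv c z r :=
    fun z hz => integral_betaIntegrandDeriv_pos hR0 hR1 hpos hc hφ₀ (Ioo_subset_Ico_self hz)
  have hcont : ContinuousOn (betaFun c R) (Icc 0 (R / c R)) :=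
    continuousOn_betaFun hR0 hR1 hpos hc hm hφ fun r hr => hM (mem_image_of_mem _ hr)
  have hmono : StrictMonoOn (betaFun c R) (Icc 0 (R / c R)) :=
    strictMonoOn_of_deriv_pos (convex_Icc _ _) hcont fun z hz => by
      rw [interior_Icc] at hz
      exact (hderiv z hz).deriv ▸ hderiv_pos z hz
  refine ⟨fun z hz => ⟨hderiv z hz, hderiv_pos z hz⟩, hmono.mono Ioo_subset_Icc_self,
    hcont.mono Ioo_subset_Icc_self, ⟨_, _,
      (hcont 0 (left_mem_Icc.2 hz₀.le)).mono Ioo_subset_Icc_self,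
      (hcont _ (right_mem_Icc.2 hz₀.le)).mono Ioo_subset_Icc_self⟩,
    betaFun c R, hcont, hmono, fun _ _ => rfl,
    isCompact_Icc.exists_homeomorph_image hcont hmono.injOn⟩
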